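/- The HOC function lies below the quadratic and only down-weighs outlier-corrupted values: for all x ∈ ℝ, l_{γ,c}(x) ≤ x²/2, with equality if and only if |x| ≤ c. -/

import Mathlib

/-!
Beyond `c` the HOC function equals `c²/2 + A/2 · log ((γ² + x²) / A)` with `A = γ² + c²`,
and the tangent-line bound `log r < r - 1` at `r = (γ² + x²) / A ≠ 1` turns this into
`c²/2 + (x² - c²)/2 = x²/2`, strictly.
-/

/-- The hybrid ordinary-Cauchy (HOC) function with parameters `γ, c > 0`. -/
noncomputable def hoc (γ c x : ℝ) : ℝ :=
  if |x| ≤ c then x ^ 2 / 2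
  else (γ ^ 2 + c ^ 2) / 2 * Real.log (1 + x ^ 2 / γ ^ 2) + c ^ 2 / 2 -
    (γ ^ 2 + c ^ 2) / 2 * Real.log (1 + c ^ 2 / γ ^ 2)

theorem Real.mul_log_div_lt_sub {a b : ℝ} (ha : 0 < a) (hb : 0 < b) (hab : a ≠ b) :
    a * Real.log (b / a) < b - a :=
  calc a * Real.log (b / a) < a * (b / a - 1) := by
        gcongr
        refine Real.log_lt_sub_one_of_pos (by positivity) ?_
        rwa [ne_eq, div_eq_one_iff_eq ha.ne', eq_comm]
    _ = b - a := by field_simp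

theorem hoc_of_abs_le {γ c x : ℝ} (hx : |x| ≤ c) : hoc γ c x = x ^ 2 / 2 :=
  if_pos hx

theorem hoc_of_lt_abs {γ c x : ℝ} (hγ : γ ≠ 0) (hx : c < |x|) :
    hoc γ c x =
      (γ ^ 2 + c ^ 2) / 2 * Real.log ((γ ^ 2 + x ^ 2) / (γ ^ 2 + c ^ 2)) + c ^ 2 / 2 := by
  have hγ2 : 0 < γ ^ 2 := by positivity
  have one_add_div (a : ℝ) : 1 + a ^ 2 / γ ^ 2 = (γ ^ 2 + a ^ 2) / γ ^ 2 := by field_simp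
  rw [hoc, if_neg hx.not_ge, one_add_div, one_add_div, Real.log_div (by positivity) hγ2.ne',
    Real.log_div (by positivity) hγ2.ne', Real.log_div (by positivity) (by positivity)]
  ring

theorem hoc_lt_of_lt_abs {γ c x : ℝ} (hγ : γ ≠ 0) (hc : 0 ≤ c) (hx : c < |x|) :
    hoc γ c x < x ^ 2 / 2 := by
  have hsq : c ^ 2 < x ^ 2 := by simpa only [sq_abs] using pow_lt_pow_left₀ hx hc two_ne_zero
  have key := Real.mul_log_div_lt_sub (a := γ ^ 2 + c ^ 2) (b := γ ^ 2 + x ^ 2)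
    (by positivity) (by positivity) (by linarith)
  rw [hoc_of_lt_abs hγ hx]
  linarith

/-- The HOC function lies below the quadratic, with equality
exactly on the non-outlier region `|x| ≤ c`. -/
theorem hoc_le_quadratic (γ c : ℝ) (hγ : 0 < γ) (hc : 0 < c) :
    ∀ x : ℝ, hoc γ c x ≤ x ^ 2 / 2 ∧ (hoc γ c x = x ^ 2 / 2 ↔ |x| ≤ c) := by
  intro x
  rcases le_or_gt |x| c with hle | hgt
  · simp [hoc_of_abs_le hle, hle]
  · have hlt := hoc_lt_of_lt_abs hγ.ne' hc.le hgt
    exact ⟨hlt.le, iff_of_false hlt.ne hgt.not_ge⟩
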